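/- For all l ∈ ℕ, 0 ≤ m ≤ l, and z = x + iy with x,y ∈ ℝ, the complex Hermite polynomial J_{m,l-m} expands in products of real Hermite polynomials as J_{m,l-m}(z) = Σ_{k=0}^{l} i^{l-k} √(k!(l-k)!/(2^l m!(l-m)!)) · (Σ_{r+s=k} binom(m,r) binom(l-m,s) (-1)^{l-m-s}) · H_k(x) H_{l-k}(y). -/

import Mathlib

open MeasureTheory Complex Filter Finset
open scoped Real ComplexConjugate

/-- The complex Hermite polynomial `J_{m,n}`. -/
noncomputable def J (m n : ℕ) (z : ℂ) : ℂ :=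
  (Real.sqrt (m.factorial * n.factorial * 2 ^ (m + n)) : ℂ)⁻¹ *
    ∑ r ∈ Finset.range (min m n + 1),
      (-1 : ℂ) ^ r * (r.factorial : ℂ) * 2 ^ r * (m.choose r : ℂ) * (n.choose r : ℂ) *
        z ^ (m - r) * (conj z) ^ (n - r)
/-- The `n`-th normalized real Hermite polynomial (as a function). -/
noncomputable def H (n : ℕ) (x : ℝ) : ℝ :=
  ((-1 : ℝ) ^ n / Real.sqrt n.factorial) * Real.exp (x ^ 2 / 2) *
    iteratedDeriv n (fun t : ℝ => Real.exp (-t ^ 2 / 2)) x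

namespace JHAux

open Polynomial

/-! ### Real Hermite polynomials -/

lemma deriv_hermite (n : ℕ) : derivative (hermite (n+1)) = (n+1) • hermite n := by
  induction n with
  | zero => simp [hermite_one, hermite_zero]
  | succ n ih =>
    rw [hermite_succ (n+1), derivative_sub, derivative_mul, derivative_X, one_mul, ih,
      derivative_smul, hermite_succ]
    ring_nf

noncomputable def he (n : ℕ) (x : ℝ) : ℝ := aeval x (hermite n)

lemma he_zero (x : ℝ) : he 0 x = 1 := by simp [he, hermite_zero]
lemma he_one (x : ℝ) : he 1 x = x := by simp [he, hermite_one]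

lemma x_mul_he (k : ℕ) (x : ℝ) : x * he k x = he (k+1) x + k * he (k-1) x := by
  cases k with
  | zero => simp [he_zero, he_one]
  | succ k =>
    have : he (k+2) x = x * he (k+1) x - (k+1) * he k x := by
      rw [he, hermite_succ (k+1), map_sub, map_mul, aeval_X, deriv_hermite, map_nsmul]
      push_cast
      simp [he]
    rw [this]; push_cast; ring_nf

noncomputable def heC (n : ℕ) (x : ℝ) : ℂ := ((he n x : ℝ) : ℂ)

lemma heC_zero (x : ℝ) : heC 0 x = 1 := by simp [heC, he_zero]
lemma heC_one (x : ℝ) : heC 1 x = (x : ℂ) := by simp [heC, he_one]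

lemma x_mul_heC (k : ℕ) (x : ℝ) :
    (x : ℂ) * heC k x = heC (k+1) x + (k : ℂ) * heC (k-1) x := by
  have h := x_mul_he k x
  unfold heC
  rw [← Complex.ofReal_mul, h]
  push_cast
  ring

/-! ### coefficients -/

lemma coeff_one_add_X_mul_derivative (p : Polynomial ℂ) (k : ℕ) :
    (((1 + X) * derivative p).coeff k : ℂ) = (k+1) * p.coeff (k+1) + k * p.coeff k := by
  rw [add_mul, one_mul]
  cases k with
  | zero => simp [coeff_derivative, mul_coeff_zero]
  | succ k =>
    rw [coeff_add, coeff_X_mul, coeff_derivative, coeff_derivative]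
    push_cast; ring

lemma coeff_one_sub_X_mul_derivative (p : Polynomial ℂ) (k : ℕ) :
    (((1 - X) * derivative p).coeff k : ℂ) = (k+1) * p.coeff (k+1) - k * p.coeff k := by
  rw [sub_mul, one_mul]
  cases k with
  | zero => simp [coeff_derivative, mul_coeff_zero]
  | succ k =>
    rw [coeff_sub, coeff_X_mul, coeff_derivative, coeff_derivative]
    push_cast; ring

lemma polyid1 (m n : ℕ) :
    (1 + X) * derivative ((X+1)^m * (X-1)^(n+1) : Polynomial ℂ)
      = C ((m:ℂ)+n+1) * ((X+1)^m * (X-1)^(n+1)) + C (2*((n:ℂ)+1)) * ((X+1)^m * (X-1)^n) := by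
  cases m with
  | zero =>
    simp only [pow_zero, one_mul, derivative_pow_succ, derivative_sub, derivative_X,
      derivative_one, sub_zero, mul_one, map_add, map_mul, map_one, map_natCast, map_ofNat]
    push_cast
    ring
  | succ m =>
    rw [derivative_mul, derivative_pow_succ, derivative_pow_succ]
    simp only [derivative_add, derivative_sub, derivative_X, derivative_one, sub_zero, add_zero,
      mul_one, map_add, map_mul, map_one, map_natCast, map_ofNat]
    push_cast
    ring

lemma polyid2 (m : ℕ) :
    (1 + X) * derivative ((X+1)^m : Polynomial ℂ) = C ((m:ℂ)) * ((X+1)^m) := by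
  cases m with
  | zero => simp
  | succ m =>
    rw [derivative_pow_succ]
    simp only [derivative_add, derivative_X, derivative_one, add_zero, mul_one,
      map_add, map_one, map_natCast]
    push_cast
    ring

lemma polyid0 (n : ℕ) :
    (1 - X) * derivative ((X-1)^n : Polynomial ℂ) + C ((n:ℂ)) * ((X-1)^n) = 0 := by
  cases n with
  | zero => simp
  | succ n =>
    rw [derivative_pow_succ]
    simp only [derivative_sub, derivative_X, derivative_one, sub_zero, mul_one,
      map_add, map_one, map_natCast]
    push_cast
    ring

noncomputable def cc (m n k : ℕ) : ℂ := (((X + 1) ^ m * (X - 1) ^ n : Polynomial ℂ)).coeff k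

lemma cc_zero_of_gt {m n k : ℕ} (h : m + n < k) : cc m n k = 0 := by
  apply coeff_eq_zero_of_natDegree_lt
  have h1 : ((X + 1 : Polynomial ℂ)).Monic := by
    simpa using monic_X_add_C (1 : ℂ)
  have h2 : ((X - 1 : Polynomial ℂ)).Monic := by
    simpa using monic_X_sub_C (1 : ℂ)
  rw [Monic.natDegree_mul (h1.pow m) (h2.pow n), Monic.natDegree_pow h1, Monic.natDegree_pow h2]
  have e1 : ((X + 1 : Polynomial ℂ)).natDegree = 1 := by simpa using natDegree_X_add_C (1 : ℂ)
  have e2 : ((X - 1 : Polynomial ℂ)).natDegree = 1 := by simpa using natDegree_X_sub_C (1 : ℂ)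
  rw [e1, e2]; omega

lemma ccPascal (m n k : ℕ) : cc (m+1) n (k+1) = cc m n (k+1) + cc m n k := by
  unfold cc
  rw [show ((X+1:Polynomial ℂ))^(m+1) * (X-1)^n = X * ((X+1)^m*(X-1)^n) + ((X+1)^m*(X-1)^n) by
    ring]
  rw [coeff_add, coeff_X_mul, add_comm]

lemma ccPascal0 (m n : ℕ) : cc (m+1) n 0 = cc m n 0 := by
  unfold cc
  rw [show ((X+1:Polynomial ℂ))^(m+1) * (X-1)^n = X * ((X+1)^m*(X-1)^n) + ((X+1)^m*(X-1)^n) by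
    ring]
  rw [coeff_add, mul_coeff_zero, coeff_X_zero, zero_mul, zero_add]

lemma ccPascaln (m n k : ℕ) : cc m (n+1) (k+1) = cc m n k - cc m n (k+1) := by
  unfold cc
  rw [show ((X+1:Polynomial ℂ))^m * (X-1)^(n+1) = X * ((X+1)^m*(X-1)^n) - ((X+1)^m*(X-1)^n) by
    ring]
  rw [coeff_sub, coeff_X_mul]

lemma ccPascaln0 (m n : ℕ) : cc m (n+1) 0 = - cc m n 0 := by
  unfold cc
  rw [show ((X+1:Polynomial ℂ))^m * (X-1)^(n+1) = X * ((X+1)^m*(X-1)^n) - ((X+1)^m*(X-1)^n) by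
    ring]
  rw [coeff_sub, mul_coeff_zero, coeff_X_zero, zero_mul, zero_sub]

lemma cc00 (k : ℕ) : cc 0 0 k = if k = 0 then 1 else 0 := by
  simp [cc, coeff_one]

lemma ccid1 (m n k : ℕ) :
    ((k:ℂ)+1) * cc m (n+1) (k+1) + k * cc m (n+1) k
      = ((m:ℂ)+n+1) * cc m (n+1) k + 2*((n:ℂ)+1) * cc m n k := by
  have h : ((1 + X) * derivative ((X+1)^m * (X-1)^(n+1) : Polynomial ℂ)).coeff k
      = (C ((m:ℂ)+n+1) * ((X+1)^m * (X-1)^(n+1))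
          + C (2*((n:ℂ)+1)) * ((X+1)^m * (X-1)^n)).coeff k := by
    rw [polyid1]
  rw [coeff_one_add_X_mul_derivative, coeff_add, coeff_C_mul, coeff_C_mul] at h
  simpa [cc, mul_assoc] using h

lemma ccid2 (m k : ℕ) :
    ((k:ℂ)+1) * cc m 0 (k+1) + k * cc m 0 k = (m:ℂ) * cc m 0 k := by
  have h : ((1 + X) * derivative ((X+1)^m : Polynomial ℂ)).coeff k
      = (C ((m:ℂ)) * ((X+1)^m)).coeff k := by rw [polyid2]
  rw [coeff_one_add_X_mul_derivative, coeff_C_mul] at h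
  simpa [cc] using h

lemma ccid0 (n k : ℕ) :
    ((k:ℂ)+1) * cc 0 n (k+1) - (k:ℂ) * cc 0 n k + (n:ℂ) * cc 0 n k = 0 := by
  have h : (((1 - X) * derivative ((X-1)^n : Polynomial ℂ)) + C ((n:ℂ)) * ((X-1)^n)).coeff k
      = (0 : Polynomial ℂ).coeff k := by rw [polyid0]
  rw [coeff_add, coeff_one_sub_X_mul_derivative, coeff_C_mul, coeff_zero] at h
  simpa [cc] using h

/-! ### the unnormalized complex Hermite polynomial -/

noncomputable def K (m n : ℕ) (z : ℂ) : ℂ :=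
  ∑ r ∈ Finset.range (min m n + 1),
      (-1 : ℂ) ^ r * (r.factorial : ℂ) * 2 ^ r * (m.choose r : ℂ) * (n.choose r : ℂ) *
        z ^ (m - r) * (conj z) ^ (n - r)

lemma K_ext (m n : ℕ) (z : ℂ) :
    K m n z = ∑ r ∈ Finset.range (m + 1),
      (-1 : ℂ) ^ r * (r.factorial : ℂ) * 2 ^ r * (m.choose r : ℂ) * (n.choose r : ℂ) *
        z ^ (m - r) * (conj z) ^ (n - r) := by
  apply Finset.sum_subset
  · intro r hr
    simp only [mem_range] at *
    have := Nat.min_le_left m n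
    omega
  · intro r hr hnr
    simp only [mem_range] at *
    have : n < r := by
      rcases Nat.le_total m n with h | h
      · omega
      · simp [Nat.min_eq_right h] at hnr; omega
    simp [Nat.choose_eq_zero_of_lt this]

lemma Kc (n : ℕ) (z : ℂ) : K 0 n z = (conj z) ^ n := by
  simp [K]

lemma Kb0 (m : ℕ) (z : ℂ) : K m 0 z = z ^ m := by
  simp [K]

lemma Ka (m n : ℕ) (z : ℂ) :
    K (m+1) (n+1) z = z * K m (n+1) z - 2*((n:ℂ)+1) * K m n z := by
  rw [K_ext (m+1) (n+1), K_ext m (n+1), K_ext m n]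
  have h1 : ∑ r ∈ Finset.range (m + 2),
      (-1 : ℂ) ^ r * (r.factorial : ℂ) * 2 ^ r * (m.choose r : ℂ) * ((n+1).choose r : ℂ) *
        z ^ (m + 1 - r) * (conj z) ^ (n + 1 - r)
      = z * ∑ r ∈ Finset.range (m + 1),
      (-1 : ℂ) ^ r * (r.factorial : ℂ) * 2 ^ r * (m.choose r : ℂ) * ((n+1).choose r : ℂ) *
        z ^ (m - r) * (conj z) ^ (n + 1 - r) := by
    rw [Finset.sum_range_succ, Nat.choose_succ_self, Finset.mul_sum]
    push_cast
    rw [mul_zero, zero_mul, zero_mul, zero_mul, add_zero]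
    apply Finset.sum_congr rfl
    intro r hr
    simp only [mem_range] at hr
    have he : m + 1 - r = (m - r) + 1 := by omega
    rw [he, pow_succ]
    ring
  rw [Finset.sum_range_succ']
  have h2 : ∀ r ∈ Finset.range (m+1),
      (-1 : ℂ) ^ (r+1) * ((r+1).factorial : ℂ) * 2 ^ (r+1) * ((m+1).choose (r+1) : ℂ) *
          ((n+1).choose (r+1) : ℂ) * z ^ (m + 1 - (r+1)) * (conj z) ^ (n + 1 - (r+1))
        = (-1 : ℂ) ^ (r+1) * ((r+1).factorial : ℂ) * 2 ^ (r+1) * (m.choose (r+1) : ℂ) *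
          ((n+1).choose (r+1) : ℂ) * z ^ (m + 1 - (r+1)) * (conj z) ^ (n + 1 - (r+1))
          - 2*((n:ℂ)+1) * ((-1 : ℂ) ^ r * (r.factorial : ℂ) * 2 ^ r * (m.choose r : ℂ) *
            (n.choose r : ℂ) * z ^ (m - r) * (conj z) ^ (n - r)) := by
    intro r _
    simp only [Nat.succ_sub_succ]
    have hb : ((n:ℂ)+1) * (n.choose r : ℂ) = ((n+1).choose (r+1) : ℂ) * ((r:ℂ)+1) := by
      exact_mod_cast congrArg (Nat.cast : ℕ → ℂ) (Nat.add_one_mul_choose_eq n r)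
    have hc : (((m+1).choose (r+1) : ℕ) : ℂ) = (m.choose r : ℂ) + (m.choose (r+1) : ℂ) := by
      exact_mod_cast congrArg (Nat.cast : ℕ → ℂ) (Nat.choose_succ_succ m r)
    rw [hc, Nat.factorial_succ]
    push_cast
    linear_combination (2*(-1:ℂ)^r * (r.factorial:ℂ) * 2^r * (m.choose r : ℂ) *
      z^(m-r) * (conj z)^(n-r)) * hb
  rw [Finset.sum_congr rfl h2, Finset.sum_sub_distrib, ← Finset.mul_sum, ← h1,
    Finset.sum_range_succ' (fun r => (-1 : ℂ) ^ r * (r.factorial : ℂ) * 2 ^ r * (m.choose r : ℂ) *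
      ((n+1).choose r : ℂ) * z ^ (m + 1 - r) * (conj z) ^ (n + 1 - r)) (m+1)]
  simp only [Nat.succ_sub_succ, Nat.choose_zero_right, Nat.factorial_zero]
  push_cast
  ring

/-! ### the RHS sum -/

noncomputable def R (m n : ℕ) (x y : ℝ) : ℂ :=
  ∑ p ∈ Finset.HasAntidiagonal.antidiagonal (m+n),
    Complex.I ^ p.2 * cc m n p.1 * heC p.1 x * heC p.2 y

lemma R00 (x y : ℝ) : R 0 0 x y = 1 := by
  simp [R, heC_zero, cc00]

lemma Ra (m n : ℕ) (x y : ℝ) :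
    R (m+1) (n+1) x y = ((x:ℂ) + y*Complex.I) * R m (n+1) x y - 2*((n:ℂ)+1) * R m n x y := by
  have hsplit : ((x:ℂ) + y*Complex.I) * R m (n+1) x y
      = (∑ p ∈ Finset.HasAntidiagonal.antidiagonal (m+n+1),
          Complex.I^p.2 * cc m (n+1) p.1 * heC (p.1+1) x * heC p.2 y)
      + (∑ p ∈ Finset.HasAntidiagonal.antidiagonal (m+n+1),
          Complex.I^p.2 * ((p.1:ℂ) * (cc m (n+1) p.1 * heC (p.1-1) x * heC p.2 y)))
      + (∑ p ∈ Finset.HasAntidiagonal.antidiagonal (m+n+1),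
          Complex.I^(p.2+1) * cc m (n+1) p.1 * heC p.1 x * heC (p.2+1) y)
      + (∑ p ∈ Finset.HasAntidiagonal.antidiagonal (m+n+1),
          Complex.I^(p.2+1) * ((p.2:ℂ) * (cc m (n+1) p.1 * heC p.1 x * heC (p.2-1) y))) := by
    rw [R, show m+(n+1) = m+n+1 from rfl, Finset.mul_sum, ← Finset.sum_add_distrib,
      ← Finset.sum_add_distrib, ← Finset.sum_add_distrib]
    apply Finset.sum_congr rfl
    intro p _
    have hx := x_mul_heC p.1 x
    have hy := x_mul_heC p.2 y
    linear_combination (Complex.I^p.2 * cc m (n+1) p.1 * heC p.2 y) * hx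
      + (Complex.I^(p.2+1) * cc m (n+1) p.1 * heC p.1 x) * hy
  have hL : R (m+1) (n+1) x y
      = (∑ p ∈ Finset.HasAntidiagonal.antidiagonal (m+n+1),
          Complex.I^p.2 * cc m (n+1) p.1 * heC (p.1+1) x * heC p.2 y)
        + (∑ p ∈ Finset.HasAntidiagonal.antidiagonal ((m+n+1)+1),
            Complex.I^p.2 * cc m (n+1) p.1 * heC p.1 x * heC p.2 y) := by
    rw [R, show (m+1)+(n+1) = (m+n+1)+1 by omega, Finset.Nat.sum_antidiagonal_succ,
      Finset.Nat.sum_antidiagonal_succ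
        (f := fun p => Complex.I^p.2 * cc m (n+1) p.1 * heC p.1 x * heC p.2 y), ccPascal0]
    have hterm : ∀ p ∈ Finset.HasAntidiagonal.antidiagonal (m+n+1),
        Complex.I^p.2 * cc (m+1) (n+1) (p.1+1) * heC (p.1+1) x * heC p.2 y
          = Complex.I^p.2 * cc m (n+1) p.1 * heC (p.1+1) x * heC p.2 y
            + Complex.I^p.2 * cc m (n+1) (p.1+1) * heC p.1.succ x * heC p.2 y := by
      intro p _
      rw [ccPascal]; ring
    rw [Finset.sum_congr rfl hterm, Finset.sum_add_distrib]
    ring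
  have hG : (∑ p ∈ Finset.HasAntidiagonal.antidiagonal ((m+n+1)+1),
        Complex.I^p.2 * cc m (n+1) p.1 * heC p.1 x * heC p.2 y)
      = ∑ p ∈ Finset.HasAntidiagonal.antidiagonal (m+n+1),
          Complex.I^(p.2+1) * cc m (n+1) p.1 * heC p.1 x * heC (p.2+1) y := by
    rw [Finset.Nat.sum_antidiagonal_succ', cc_zero_of_gt (show m+(n+1) < m+n+1+1 by omega)]
    simp
  have hT2 : (∑ p ∈ Finset.HasAntidiagonal.antidiagonal (m+n+1),
        Complex.I^p.2 * ((p.1:ℂ) * (cc m (n+1) p.1 * heC (p.1-1) x * heC p.2 y)))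
      = ∑ p ∈ Finset.HasAntidiagonal.antidiagonal (m+n),
          Complex.I^p.2 * (((p.1:ℂ)+1) * (cc m (n+1) (p.1+1) * heC p.1 x * heC p.2 y)) := by
    rw [Finset.Nat.sum_antidiagonal_succ]
    push_cast
    simp
  have hT4 : (∑ p ∈ Finset.HasAntidiagonal.antidiagonal (m+n+1),
        Complex.I^(p.2+1) * ((p.2:ℂ) * (cc m (n+1) p.1 * heC p.1 x * heC (p.2-1) y)))
      = ∑ p ∈ Finset.HasAntidiagonal.antidiagonal (m+n),
          (-(Complex.I^p.2)) * (((p.2:ℂ)+1) * (cc m (n+1) p.1 * heC p.1 x * heC p.2 y)) := by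
    rw [Finset.Nat.sum_antidiagonal_succ']
    simp only [Nat.cast_zero, zero_mul, mul_zero, zero_add, Nat.cast_add, Nat.cast_one,
      Nat.add_sub_cancel]
    apply Finset.sum_congr rfl
    intro p _
    have hI : Complex.I^(p.2+1+1) = -Complex.I^p.2 := by
      rw [pow_succ, pow_succ, mul_assoc, Complex.I_mul_I]; ring
    rw [hI]
  have hfinal : (∑ p ∈ Finset.HasAntidiagonal.antidiagonal (m+n),
        Complex.I^p.2 * (((p.1:ℂ)+1) * (cc m (n+1) (p.1+1) * heC p.1 x * heC p.2 y)))
      + (∑ p ∈ Finset.HasAntidiagonal.antidiagonal (m+n),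
          (-(Complex.I^p.2)) * (((p.2:ℂ)+1) * (cc m (n+1) p.1 * heC p.1 x * heC p.2 y)))
      = 2*((n:ℂ)+1) * R m n x y := by
    rw [R, Finset.mul_sum, ← Finset.sum_add_distrib]
    apply Finset.sum_congr rfl
    intro p hp
    have hpc : (p.1:ℂ) + (p.2:ℂ) = (m:ℂ) + n := by
      exact_mod_cast congrArg (Nat.cast : ℕ → ℂ) (Finset.HasAntidiagonal.mem_antidiagonal.mp hp)
    have h := ccid1 m n p.1
    linear_combination (Complex.I^p.2 * heC p.1 x * heC p.2 y) * h
      - (Complex.I^p.2 * heC p.1 x * heC p.2 y * cc m (n+1) p.1) * hpc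
  linear_combination hL + hG - hsplit - hT2 - hT4 - hfinal

lemma Rb (m : ℕ) (x y : ℝ) :
    R (m+1) 0 x y = ((x:ℂ) + y*Complex.I) * R m 0 x y := by
  have hsplit : ((x:ℂ) + y*Complex.I) * R m 0 x y
      = (∑ p ∈ Finset.HasAntidiagonal.antidiagonal m,
          Complex.I^p.2 * cc m 0 p.1 * heC (p.1+1) x * heC p.2 y)
      + (∑ p ∈ Finset.HasAntidiagonal.antidiagonal m,
          Complex.I^p.2 * ((p.1:ℂ) * (cc m 0 p.1 * heC (p.1-1) x * heC p.2 y)))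
      + (∑ p ∈ Finset.HasAntidiagonal.antidiagonal m,
          Complex.I^(p.2+1) * cc m 0 p.1 * heC p.1 x * heC (p.2+1) y)
      + (∑ p ∈ Finset.HasAntidiagonal.antidiagonal m,
          Complex.I^(p.2+1) * ((p.2:ℂ) * (cc m 0 p.1 * heC p.1 x * heC (p.2-1) y))) := by
    rw [R, show m+0 = m from rfl, Finset.mul_sum, ← Finset.sum_add_distrib,
      ← Finset.sum_add_distrib, ← Finset.sum_add_distrib]
    apply Finset.sum_congr rfl
    intro p _
    have hx := x_mul_heC p.1 x
    have hy := x_mul_heC p.2 y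
    linear_combination (Complex.I^p.2 * cc m 0 p.1 * heC p.2 y) * hx
      + (Complex.I^(p.2+1) * cc m 0 p.1 * heC p.1 x) * hy
  have hL : R (m+1) 0 x y
      = (∑ p ∈ Finset.HasAntidiagonal.antidiagonal m,
          Complex.I^p.2 * cc m 0 p.1 * heC (p.1+1) x * heC p.2 y)
        + (∑ p ∈ Finset.HasAntidiagonal.antidiagonal (m+1),
            Complex.I^p.2 * cc m 0 p.1 * heC p.1 x * heC p.2 y) := by
    rw [R, show (m+1)+0 = m+1 from rfl, Finset.Nat.sum_antidiagonal_succ,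
      Finset.Nat.sum_antidiagonal_succ
        (f := fun p => Complex.I^p.2 * cc m 0 p.1 * heC p.1 x * heC p.2 y), ccPascal0]
    have hterm : ∀ p ∈ Finset.HasAntidiagonal.antidiagonal m,
        Complex.I^p.2 * cc (m+1) 0 (p.1+1) * heC (p.1+1) x * heC p.2 y
          = Complex.I^p.2 * cc m 0 p.1 * heC (p.1+1) x * heC p.2 y
            + Complex.I^p.2 * cc m 0 (p.1+1) * heC p.1.succ x * heC p.2 y := by
      intro p _
      rw [ccPascal]; ring
    rw [Finset.sum_congr rfl hterm, Finset.sum_add_distrib]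
    ring
  have hG : (∑ p ∈ Finset.HasAntidiagonal.antidiagonal (m+1),
        Complex.I^p.2 * cc m 0 p.1 * heC p.1 x * heC p.2 y)
      = ∑ p ∈ Finset.HasAntidiagonal.antidiagonal m,
          Complex.I^(p.2+1) * cc m 0 p.1 * heC p.1 x * heC (p.2+1) y := by
    rw [Finset.Nat.sum_antidiagonal_succ', cc_zero_of_gt (show m+0 < m+1 by omega)]
    simp
  have hT24 : (∑ p ∈ Finset.HasAntidiagonal.antidiagonal m,
        Complex.I^p.2 * ((p.1:ℂ) * (cc m 0 p.1 * heC (p.1-1) x * heC p.2 y)))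
      + (∑ p ∈ Finset.HasAntidiagonal.antidiagonal m,
          Complex.I^(p.2+1) * ((p.2:ℂ) * (cc m 0 p.1 * heC p.1 x * heC (p.2-1) y))) = 0 := by
    cases m with
    | zero => simp
    | succ M =>
      have hT2 : (∑ p ∈ Finset.HasAntidiagonal.antidiagonal (M+1),
            Complex.I^p.2 * ((p.1:ℂ) * (cc (M+1) 0 p.1 * heC (p.1-1) x * heC p.2 y)))
          = ∑ p ∈ Finset.HasAntidiagonal.antidiagonal M,
              Complex.I^p.2 * (((p.1:ℂ)+1) * (cc (M+1) 0 (p.1+1) * heC p.1 x * heC p.2 y)) := by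
        rw [Finset.Nat.sum_antidiagonal_succ]
        push_cast
        simp
      have hT4 : (∑ p ∈ Finset.HasAntidiagonal.antidiagonal (M+1),
            Complex.I^(p.2+1) * ((p.2:ℂ) * (cc (M+1) 0 p.1 * heC p.1 x * heC (p.2-1) y)))
          = ∑ p ∈ Finset.HasAntidiagonal.antidiagonal M,
              (-(Complex.I^p.2)) * (((p.2:ℂ)+1) * (cc (M+1) 0 p.1 * heC p.1 x * heC p.2 y)) := by
        rw [Finset.Nat.sum_antidiagonal_succ']
        simp only [Nat.cast_zero, zero_mul, mul_zero, zero_add, Nat.cast_add, Nat.cast_one,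
          Nat.add_sub_cancel]
        apply Finset.sum_congr rfl
        intro p _
        have hI : Complex.I^(p.2+1+1) = -Complex.I^p.2 := by
          rw [pow_succ, pow_succ, mul_assoc, Complex.I_mul_I]; ring
        rw [hI]
      rw [hT2, hT4, ← Finset.sum_add_distrib]
      apply Finset.sum_eq_zero
      intro p hp
      have hpc : (p.1:ℂ) + (p.2:ℂ) = (M:ℂ) := by
        exact_mod_cast congrArg (Nat.cast : ℕ → ℂ) (Finset.HasAntidiagonal.mem_antidiagonal.mp hp)
      have h := ccid2 (M+1) p.1
      push_cast at h
      linear_combination (Complex.I^p.2 * heC p.1 x * heC p.2 y) * h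
        - (Complex.I^p.2 * heC p.1 x * heC p.2 y * cc (M+1) 0 p.1) * hpc
  linear_combination hL + hG - hsplit - hT24

lemma Rc (n : ℕ) (x y : ℝ) :
    R 0 (n+1) x y = ((x:ℂ) - y*Complex.I) * R 0 n x y := by
  have hsplit : ((x:ℂ) - y*Complex.I) * R 0 n x y
      = (∑ p ∈ Finset.HasAntidiagonal.antidiagonal n,
          Complex.I^p.2 * cc 0 n p.1 * heC (p.1+1) x * heC p.2 y)
      + (∑ p ∈ Finset.HasAntidiagonal.antidiagonal n,
          Complex.I^p.2 * ((p.1:ℂ) * (cc 0 n p.1 * heC (p.1-1) x * heC p.2 y)))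
      - (∑ p ∈ Finset.HasAntidiagonal.antidiagonal n,
          Complex.I^(p.2+1) * cc 0 n p.1 * heC p.1 x * heC (p.2+1) y)
      - (∑ p ∈ Finset.HasAntidiagonal.antidiagonal n,
          Complex.I^(p.2+1) * ((p.2:ℂ) * (cc 0 n p.1 * heC p.1 x * heC (p.2-1) y))) := by
    rw [R, show 0+n = n by omega, Finset.mul_sum, ← Finset.sum_add_distrib,
      ← Finset.sum_sub_distrib, ← Finset.sum_sub_distrib]
    apply Finset.sum_congr rfl
    intro p _
    have hx := x_mul_heC p.1 x
    have hy := x_mul_heC p.2 y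
    linear_combination (Complex.I^p.2 * cc 0 n p.1 * heC p.2 y) * hx
      - (Complex.I^(p.2+1) * cc 0 n p.1 * heC p.1 x) * hy
  have hL : R 0 (n+1) x y
      = (∑ p ∈ Finset.HasAntidiagonal.antidiagonal n,
          Complex.I^p.2 * cc 0 n p.1 * heC (p.1+1) x * heC p.2 y)
        - (∑ p ∈ Finset.HasAntidiagonal.antidiagonal (n+1),
            Complex.I^p.2 * cc 0 n p.1 * heC p.1 x * heC p.2 y) := by
    rw [R, show 0+(n+1) = n+1 by omega, Finset.Nat.sum_antidiagonal_succ,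
      Finset.Nat.sum_antidiagonal_succ
        (f := fun p => Complex.I^p.2 * cc 0 n p.1 * heC p.1 x * heC p.2 y), ccPascaln0]
    have hterm : ∀ p ∈ Finset.HasAntidiagonal.antidiagonal n,
        Complex.I^p.2 * cc 0 (n+1) (p.1+1) * heC (p.1+1) x * heC p.2 y
          = Complex.I^p.2 * cc 0 n p.1 * heC (p.1+1) x * heC p.2 y
            - Complex.I^p.2 * cc 0 n (p.1+1) * heC p.1.succ x * heC p.2 y := by
      intro p _
      rw [ccPascaln]; ring
    rw [Finset.sum_congr rfl hterm, Finset.sum_sub_distrib]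
    ring
  have hG : (∑ p ∈ Finset.HasAntidiagonal.antidiagonal (n+1),
        Complex.I^p.2 * cc 0 n p.1 * heC p.1 x * heC p.2 y)
      = ∑ p ∈ Finset.HasAntidiagonal.antidiagonal n,
          Complex.I^(p.2+1) * cc 0 n p.1 * heC p.1 x * heC (p.2+1) y := by
    rw [Finset.Nat.sum_antidiagonal_succ', cc_zero_of_gt (show 0+n < n+1 by omega)]
    simp
  have hT24 : (∑ p ∈ Finset.HasAntidiagonal.antidiagonal n,
        Complex.I^p.2 * ((p.1:ℂ) * (cc 0 n p.1 * heC (p.1-1) x * heC p.2 y)))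
      - (∑ p ∈ Finset.HasAntidiagonal.antidiagonal n,
          Complex.I^(p.2+1) * ((p.2:ℂ) * (cc 0 n p.1 * heC p.1 x * heC (p.2-1) y))) = 0 := by
    cases n with
    | zero => simp
    | succ N =>
      have hT2 : (∑ p ∈ Finset.HasAntidiagonal.antidiagonal (N+1),
            Complex.I^p.2 * ((p.1:ℂ) * (cc 0 (N+1) p.1 * heC (p.1-1) x * heC p.2 y)))
          = ∑ p ∈ Finset.HasAntidiagonal.antidiagonal N,
              Complex.I^p.2 * (((p.1:ℂ)+1) * (cc 0 (N+1) (p.1+1) * heC p.1 x * heC p.2 y)) := by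
        rw [Finset.Nat.sum_antidiagonal_succ]
        push_cast
        simp
      have hT4 : (∑ p ∈ Finset.HasAntidiagonal.antidiagonal (N+1),
            Complex.I^(p.2+1) * ((p.2:ℂ) * (cc 0 (N+1) p.1 * heC p.1 x * heC (p.2-1) y)))
          = ∑ p ∈ Finset.HasAntidiagonal.antidiagonal N,
              (-(Complex.I^p.2)) * (((p.2:ℂ)+1) * (cc 0 (N+1) p.1 * heC p.1 x * heC p.2 y)) := by
        rw [Finset.Nat.sum_antidiagonal_succ']
        simp only [Nat.cast_zero, zero_mul, mul_zero, zero_add, Nat.cast_add, Nat.cast_one,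
          Nat.add_sub_cancel]
        apply Finset.sum_congr rfl
        intro p _
        have hI : Complex.I^(p.2+1+1) = -Complex.I^p.2 := by
          rw [pow_succ, pow_succ, mul_assoc, Complex.I_mul_I]; ring
        rw [hI]
      rw [hT2, hT4, ← Finset.sum_sub_distrib]
      apply Finset.sum_eq_zero
      intro p hp
      have hpc : (p.1:ℂ) + (p.2:ℂ) = (N:ℂ) := by
        exact_mod_cast congrArg (Nat.cast : ℕ → ℂ) (Finset.HasAntidiagonal.mem_antidiagonal.mp hp)
      have h := ccid0 (N+1) p.1
      push_cast at h
      linear_combination (Complex.I^p.2 * heC p.1 x * heC p.2 y) * h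
        + (Complex.I^p.2 * heC p.1 x * heC p.2 y * cc 0 (N+1) p.1) * hpc
  linear_combination hL - hG - hsplit - hT24


lemma KR (m n : ℕ) (x y : ℝ) : K m n ((x:ℂ) + y*Complex.I) = R m n x y := by
  have hconj : conj ((x:ℂ) + y*Complex.I) = (x:ℂ) - y*Complex.I := by
    simp [Complex.ext_iff]
  induction m generalizing n with
  | zero =>
    induction n with
    | zero => simp [Kc, R00]
    | succ n ihn =>
      rw [Kc, pow_succ, ← Kc n, ihn, Rc, hconj, mul_comm]
  | succ m ihm =>
    cases n with
    | zero =>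
      rw [Kb0, pow_succ, ← Kb0 m, ihm 0, Rb, mul_comm]
    | succ n =>
      rw [Ka, ihm (n+1), ihm n, Ra]

lemma H_eq (n : ℕ) (x : ℝ) : H n x = he n x / Real.sqrt n.factorial := by
  rw [H, he]
  have hfun : (fun t : ℝ => Real.exp (-t ^ 2 / 2)) = fun t : ℝ => Real.exp (-(t^2/2)) := by
    funext t; rw [neg_div]
  rw [hfun, iteratedDeriv_eq_iterate, Polynomial.deriv_gaussian_eq_hermite_mul_gaussian,
    Real.exp_neg]
  have h2 : (-1:ℝ)^n * (-1:ℝ)^n = 1 := by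
    rw [← pow_add]
    exact Even.neg_one_pow ⟨n, rfl⟩
  have h3 : Real.exp (x^2/2) ≠ 0 := Real.exp_ne_zero _
  have h4 : ((-1:ℝ)^n / Real.sqrt n.factorial) * Real.exp (x^2/2)
      * ((-1:ℝ)^n * (aeval x (hermite n)) * (Real.exp (x^2/2))⁻¹)
      = ((-1:ℝ)^n*(-1:ℝ)^n) * (aeval x (hermite n))
        * (Real.exp (x^2/2) * (Real.exp (x^2/2))⁻¹) / Real.sqrt n.factorial := by ring
  rw [h4, h2, mul_inv_cancel₀ h3]
  ring

lemma cc_eq (m n k : ℕ) :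
    cc m n k = ∑ r ∈ Finset.range (k+1),
      (m.choose r : ℂ) * (n.choose (k-r) : ℂ) * (-1:ℂ)^(n-(k-r)) := by
  unfold cc
  rw [Polynomial.coeff_mul, Finset.Nat.sum_antidiagonal_eq_sum_range_succ_mk]
  apply Finset.sum_congr rfl
  intro r _
  rw [coeff_X_add_one_pow, show ((X:Polynomial ℂ) - 1) = X + C (-1) by rw [map_neg, map_one, ← sub_eq_add_neg], coeff_X_add_C_pow]
  ring

end JHAux

open JHAux in
theorem J_expand_in_H (l m : ℕ) (hm : m ≤ l) (x y : ℝ) :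
    J m (l - m) (x + y * Complex.I)
      = ∑ k ∈ Finset.range (l + 1),
          Complex.I ^ (l - k) *
            (Real.sqrt ((k.factorial * (l - k).factorial : ℝ) /
              (2 ^ l * m.factorial * (l - m).factorial)) : ℂ) *
            (∑ r ∈ Finset.range (k + 1),
              (m.choose r : ℂ) * ((l - m).choose (k - r) : ℂ) * (-1 : ℂ) ^ (l - m - (k - r))) *
            (H k x : ℂ) * (H (l - k) y : ℂ) := by
  have hmn : m + (l - m) = l := by omega
  have hJ : J m (l-m) ((x:ℂ) + (y:ℂ) * Complex.I)
      = (Real.sqrt ((m.factorial : ℝ) * (l-m).factorial * 2 ^ (m + (l-m))) : ℂ)⁻¹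
        * K m (l-m) ((x:ℂ) + (y:ℂ)*Complex.I) := rfl
  rw [hJ, hmn, KR, R, hmn, Finset.Nat.sum_antidiagonal_eq_sum_range_succ_mk, Finset.mul_sum]
  apply Finset.sum_congr rfl
  intro k hk
  simp only [Finset.mem_range] at hk
  rw [H_eq, H_eq, ← cc_eq]
  have h1 : (0:ℝ) < Real.sqrt k.factorial :=
    Real.sqrt_pos.mpr (by exact_mod_cast Nat.factorial_pos k)
  have h2 : (0:ℝ) < Real.sqrt (l-k).factorial :=
    Real.sqrt_pos.mpr (by exact_mod_cast Nat.factorial_pos (l-k))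
  have h3 : (0:ℝ) < Real.sqrt m.factorial :=
    Real.sqrt_pos.mpr (by exact_mod_cast Nat.factorial_pos m)
  have h4 : (0:ℝ) < Real.sqrt (l-m).factorial :=
    Real.sqrt_pos.mpr (by exact_mod_cast Nat.factorial_pos (l-m))
  have h5 : (0:ℝ) < Real.sqrt (2^l) := Real.sqrt_pos.mpr (by positivity)
  have hs : Real.sqrt ((k.factorial * (l - k).factorial : ℝ) /
        (2 ^ l * m.factorial * (l - m).factorial))
        * ((Real.sqrt k.factorial)⁻¹ * (Real.sqrt (l-k).factorial)⁻¹)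
      = (Real.sqrt ((m.factorial : ℝ) * (l-m).factorial * 2 ^ l))⁻¹ := by
    rw [Real.sqrt_div (by positivity) _, Real.sqrt_mul (by positivity),
      Real.sqrt_mul (by positivity), Real.sqrt_mul (by positivity),
      Real.sqrt_mul (by positivity), Real.sqrt_mul (by positivity)]
    field_simp
  have hsC := congrArg (fun t : ℝ => (t : ℂ)) hs
  push_cast at hsC
  have hheC1 : heC k x = ((he k x : ℝ) : ℂ) := rfl
  have hheC2 : heC (l-k) y = ((he (l-k) y : ℝ) : ℂ) := rfl
  rw [hheC1, hheC2]
  push_cast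
  linear_combination (-(Complex.I^(l-k) * cc m (l-m) k * ((he k x : ℝ):ℂ)
    * ((he (l-k) y : ℝ):ℂ))) * hsC
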